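/- arXiv:2503.12571 — 2 statements merged into one kernel-verified Lean document; each statement's English description precedes it below -/
import Mathlib

section
/- Let α ≥ 2 be a countable ordinal and let X = ω^α + 1 with the order topology. For A ⊆ X, A belongs to conv_α (i.e., A^d is finite) if and only if for every strictly increasing sequence (λ_n) in ω^α, the set A ∩ [λ_n, λ_{n+1}] is finite for all but finitely many n. -/
open Set Filter Topology Ordinal

noncomputable section

/-- The derived set of `A`: the set of accumulation (limit) points of `A`. -/
def derivSet {X : Type*} [TopologicalSpace X] (A : Set X) : Set X :=
  {p | p ∈ closure (A \ {p})}

/-- The ordinal space `ω^a + 1 = [0, ω^a]` with the (order) topology. -/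
abbrev OrdSpace (a : Ordinal) : Type _ := ↥(Set.Iic (omega0 ^ a))

/-- The ideal `conv_a` on `ω^a + 1`: sets with finite derived set. -/
def convIdeal (a : Ordinal) : Set (Set (OrdSpace a)) :=
  {A | (derivSet A).Finite}

/-- `I` is an ideal of subsets. -/
structure IsIdeal {S : Type*} (I : Set (Set S)) : Prop where
  empty_mem : ∅ ∈ I
  subset_mem : ∀ {A B : Set S}, A ⊆ B → B ∈ I → A ∈ I
  union_mem : ∀ {A B : Set S}, A ∈ I → B ∈ I → A ∪ B ∈ I

/-- The subsequence of `f` indexed by `A` converges to `x`. -/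
def ConvAlong {X : Type*} [TopologicalSpace X] (f : ℕ → X) (A : Set ℕ) (x : X) : Prop :=
  ∀ U ∈ nhds x, {n ∈ A | f n ∉ U}.Finite

/-- Katětov order: `J ≤_K I`, where `I` lives on `X` and `J` on `Y`. -/
def KatetovLE {X Y : Type*} (J : Set (Set Y)) (I : Set (Set X)) : Prop :=
  ∃ f : X → Y, ∀ A ∈ J, f ⁻¹' A ∈ I

/-- `X ∈ FinBW(I)`: every sequence in `X` has a convergent subsequence indexed
by an `I`-positive set. -/
def InFinBW (I : Set (Set ℕ)) (X : Type*) [TopologicalSpace X] : Prop :=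
  ∀ f : ℕ → X, ∃ A : Set ℕ, A ∉ I ∧ ∃ x : X, ConvAlong f A x

/-!
If `A ∩ [λ_n, λ_{n+1}]` is infinite, compactness of the interval gives an accumulation point of
`A` in it; a point lies in at most two of the intervals `[λ_n, λ_{n+1}]`, so infinitely many
such `n` produce infinitely many accumulation points. Conversely, an infinite derived set in the
well-order `ω^α + 1` contains a strictly increasing sequence `p_n`; since `(q, p]` is a
neighbourhood of `p` in an ordinal space, `A ∩ [p_n, p_{n+1}]` is infinite for every `n`.
-/

lemma derivSet_eq_derivedSet {X : Type*} [TopologicalSpace X] (A : Set X) :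
    derivSet A = derivedSet A := by
  ext p
  exact mem_closure_iff_clusterPt.trans accPt_principal_iff_clusterPt.symm

lemma AccPt.infinite_inter_of_mem_nhds {X : Type*} [TopologicalSpace X] [T1Space X] {x : X}
    {S U : Set X} (h : AccPt x (𝓟 S)) (hU : U ∈ 𝓝 x) : (U ∩ S).Infinite :=
  Set.Infinite.of_accPt <| accPt_iff_frequently.2 <|
    ((accPt_iff_frequently.1 h).and_eventually hU).mono fun _ ⟨⟨hne, hS⟩, hU⟩ => ⟨hne, hU, hS⟩

lemma Set.Infinite.exists_strictMono_forall_mem {α : Type*} [LinearOrder α] [WellFoundedLT α]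
    {s : Set α} (hs : s.Infinite) : ∃ f : ℕ → α, StrictMono f ∧ ∀ n, f n ∈ s := by
  have := hs.to_subtype
  obtain ⟨f, hf | hf⟩ := Infinite.exists_strictMono_or_strictAnti s
  · exact ⟨fun n => f n, hf, fun n => (f n).2⟩
  · exact (not_strictAnti_of_wellFoundedLT f hf).elim

lemma StrictMono.finite_setOf_le_le_succ {β : Type*} [Preorder β] {l : ℕ → β}
    (hl : StrictMono l) (q : β) : {n | l n ≤ q ∧ q ≤ l (n + 1)}.Finite := by
  rcases eq_empty_or_nonempty {n | l n ≤ q ∧ q ≤ l (n + 1)} with h | ⟨n₀, -, hq⟩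
  · simp [h]
  · exact (finite_Iic (n₀ + 1)).subset fun m hm => hl.le_iff_le.mp (hm.1.trans hq)

theorem eventually_finite_sep_Icc_of_finite_derivedSet {X β : Type*} [TopologicalSpace X]
    [CompactSpace X] [LinearOrder β] [TopologicalSpace β] [OrderClosedTopology β] {v : X → β}
    (hv : Continuous v) {A : Set X} (hA : (derivedSet A).Finite) {l : ℕ → β}
    (hl : StrictMono l) :
    ∀ᶠ n in atTop, {x ∈ A | l n ≤ v x ∧ v x ≤ l (n + 1)}.Finite := by
  have hacc : ∀ n, {x ∈ A | l n ≤ v x ∧ v x ≤ l (n + 1)}.Infinite →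
      ∃ p ∈ derivedSet A, l n ≤ v p ∧ v p ≤ l (n + 1) := by
    intro n hn
    obtain ⟨p, hpI, hp⟩ := hn.exists_accPt_of_subset_isCompact
      (isClosed_Icc.preimage hv).isCompact fun x hx => hx.2
    exact ⟨p, derivedSet_mono _ _ (sep_subset _ _) hp, hpI⟩
  have hbad : {n | ¬{x ∈ A | l n ≤ v x ∧ v x ≤ l (n + 1)}.Finite}.Finite :=
    (hA.biUnion fun p _ => hl.finite_setOf_le_le_succ (v p)).subset fun n hn => by
      obtain ⟨p, hp, hpI⟩ := hacc n hn
      exact mem_biUnion hp hpI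
  exact Nat.cofinite_eq_atTop ▸ eventually_cofinite.2 hbad

instance OrdSpace.instCompactSpace (a : Ordinal) : CompactSpace (OrdSpace a) :=
  isCompact_iff_compactSpace.mp <| by
    rw [← Icc_bot]
    exact isCompact_Icc

lemma OrdSpace.preimage_Ioc_mem_nhds {a q : Ordinal} {p : OrdSpace a} (h : q < p) :
    Subtype.val ⁻¹' Ioc q (p : Ordinal) ∈ 𝓝 p := by
  rw [← Order.Ioo_succ_right]
  exact continuous_subtype_val.continuousAt.preimage_mem_nhds (Ioo_mem_nhds h (Order.lt_succ _))

lemma OrdSpace.exists_strictMono_infinite_sep_Icc {a : Ordinal} {A : Set (OrdSpace a)}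
    (hA : (derivedSet A).Infinite) :
    ∃ p : ℕ → OrdSpace a, StrictMono p ∧ ∀ n, {x ∈ A | p n ≤ x ∧ x ≤ p (n + 1)}.Infinite := by
  obtain ⟨p, hp, hpA⟩ := hA.exists_strictMono_forall_mem
  refine ⟨p, hp, fun n => ?_⟩
  refine ((hpA (n + 1)).infinite_inter_of_mem_nhds
    (preimage_Ioc_mem_nhds (hp n.lt_succ_self))).mono ?_
  rintro x ⟨⟨hlo, hhi⟩, hx⟩
  exact ⟨hx, hlo.le, hhi⟩

theorem stmt3_general (a : Ordinal) (A : Set (OrdSpace a)) :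
    A ∈ convIdeal a ↔
      ∀ l : ℕ → Ordinal, StrictMono l → (∀ n, l n < omega0 ^ a) →
        ∀ᶠ n in atTop,
          {x ∈ A | l n ≤ (x : Ordinal) ∧ (x : Ordinal) ≤ l (n + 1)}.Finite := by
  rw [convIdeal, mem_ofPred_eq, derivSet_eq_derivedSet]
  refine ⟨fun hA l hl _ => eventually_finite_sep_Icc_of_finite_derivedSet
    continuous_subtype_val hA hl, fun h => ?_⟩
  by_contra hA
  obtain ⟨p, hp, hinf⟩ := OrdSpace.exists_strictMono_infinite_sep_Icc hA
  obtain ⟨n, hn⟩ := (h (Subtype.val ∘ p) hp fun n =>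
    (Subtype.coe_lt_coe.2 (hp n.lt_succ_self)).trans_le (p (n + 1)).prop).exists
  exact hinf n hn

/-- Combinatorial characterization of `conv_a`: `A ∈ conv_a` iff for every strictly
increasing sequence `(λ_n)` in `ω^a`, `A ∩ [λ_n, λ_{n+1}]` is finite for all but
finitely many `n`. -/
theorem stmt3 (a : Ordinal) (ha : 2 ≤ a) (hac : a.card ≤ Cardinal.aleph0)
    (A : Set (OrdSpace a)) :
    A ∈ convIdeal a ↔
      ∀ l : ℕ → Ordinal, StrictMono l → (∀ n, l n < omega0 ^ a) →
        ∀ᶠ n in atTop,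
          {x ∈ A | l n ≤ (x : Ordinal) ∧ (x : Ordinal) ≤ l (n + 1)}.Finite :=
  stmt3_general a A
end
end

section
/- For every countable ordinal α ≥ 2, the ideal conv_α contains an isomorphic copy of itself via a one-to-one map into conv_α ⊗ {∅}; that is, conv_α ⊑ conv_α ⊗ {∅}. -/
open Set Filter Topology Ordinal

noncomputable section

/-!
Write `ξ < ω^α` as `ω * q + k` with `k` finite and send `(ξ, n)` to `ω * q + (2 * ⟪k, n⟫ + 1)`,
inside the `ω`-block of `ξ` and above `ξ`; the row of `ω^α` goes to the even natural numbers.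
Accumulation points of ordinals are limits, and a limit `ζ > ξ` lies above the whole `ω`-block
of `ξ`. So if `ζ` accumulates points `ξ` whose row meets `A`, then `ζ` accumulates points of `A`:
the derived set of `{ξ | (ξ, n) ∈ f⁻¹[A] for some n}` is contained in the derived set of `A`.
-/

open Order

theorem mem_derivSet_iff_accPt {X : Type*} [TopologicalSpace X] {A : Set X} {p : X} :
    p ∈ derivSet A ↔ AccPt p (𝓟 A) := by
  rw [accPt_principal_iff_clusterPt, ← mem_closure_iff_clusterPt]
  rfl

theorem mem_derivSet_subtype_iff {X : Type*} [TopologicalSpace X] {s : Set X} {A : Set s}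
    {p : s} : p ∈ derivSet A ↔ (p : X) ∈ derivSet (Subtype.val '' A) := by
  simp only [derivSet, mem_ofPred_eq, IsInducing.subtypeVal.closure_eq_preimage_closure_image,
    mem_preimage, image_sdiff Subtype.val_injective, image_singleton]

theorem AccPt.of_forall_lt_exists_mem_Ico {α : Type*} [LinearOrder α] [TopologicalSpace α]
    [OrderTopology α] [SuccOrder α] [NoMaxOrder α] {p : α} {S T : Set α} (hT : AccPt p (𝓟 T))
    (h : ∀ t ∈ T, t < p → ∃ s ∈ S, t ≤ s ∧ s < p) : AccPt p (𝓟 S) := by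
  rw [SuccOrder.accPt_principal] at hT ⊢
  refine ⟨hT.1, fun b hb => ?_⟩
  obtain ⟨t, htT, hbt, htp⟩ := hT.2 b hb
  obtain ⟨s, hsS, hts, hsp⟩ := h t htT htp
  exact ⟨s, hsS, hbt.trans_le hts, hsp⟩

namespace Ordinal

def finPart (x : Ordinal) : ℕ :=
  Cardinal.toNat (x % ω).card

theorem natCast_finPart (x : Ordinal) : (x.finPart : Ordinal) = x % ω := by
  obtain ⟨k, hk⟩ := lt_omega0.mp (mod_lt x omega0_ne_zero)
  rw [finPart, hk, card_nat, Cardinal.toNat_natCast]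

def blockShift (x : Ordinal) (n : ℕ) : Ordinal :=
  ω * (x / ω) + ((2 * Nat.pair x.finPart n + 1 : ℕ) : Ordinal)

theorem blockShift_div_omega0 (x : Ordinal) (n : ℕ) : blockShift x n / ω = x / ω := by
  rw [blockShift, mul_add_div _ omega0_ne_zero, div_eq_zero_of_lt (natCast_lt_omega0 _),
    add_zero]

theorem blockShift_mod_omega0 (x : Ordinal) (n : ℕ) :
    blockShift x n % ω = ((2 * Nat.pair x.finPart n + 1 : ℕ) : Ordinal) := by
  rw [blockShift, mul_add_mod_self, mod_eq_of_lt (natCast_lt_omega0 _)]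

theorem blockShift_inj {x y : Ordinal} {m n : ℕ} :
    blockShift x m = blockShift y n ↔ x = y ∧ m = n := by
  refine ⟨fun h => ?_, fun ⟨hxy, hmn⟩ => hxy ▸ hmn ▸ rfl⟩
  have hdiv : x / ω = y / ω := by
    rw [← blockShift_div_omega0 x m, ← blockShift_div_omega0 y n, h]
  have hpair : Nat.pair x.finPart m = Nat.pair y.finPart n := by
    have := congrArg (· % ω) h
    simp only [blockShift_mod_omega0, Nat.cast_inj] at this
    omega
  obtain ⟨hk, hmn⟩ := Nat.pair_eq_pair.mp hpair
  refine ⟨?_, hmn⟩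
  rw [← div_add_mod x ω, ← div_add_mod y ω, hdiv, ← natCast_finPart, ← natCast_finPart, hk]

theorem blockShift_ne_natCast_two_mul (x : Ordinal) (n m : ℕ) :
    blockShift x n ≠ ((2 * m : ℕ) : Ordinal) := by
  intro h
  have := congrArg (· % ω) h
  simp only [blockShift_mod_omega0, mod_eq_of_lt (natCast_lt_omega0 _), Nat.cast_inj] at this
  omega

theorem le_blockShift (x : Ordinal) (n : ℕ) : x ≤ blockShift x n := by
  conv_lhs => rw [← div_add_mod x ω, ← natCast_finPart]
  refine add_le_add_right (Nat.cast_le.mpr ?_) _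
  have := Nat.left_le_pair x.finPart n
  omega

theorem blockShift_lt {x o : Ordinal} (ho : IsSuccLimit o) (hx : x < o) (n : ℕ) :
    blockShift x n < o :=
  (add_le_add_left (mul_div_le x ω) _).trans_lt (ho.add_natCast_lt hx _)

def rowMap {o : Ordinal} (ho : IsSuccLimit o) (p : Iic o × ℕ) : Iic o :=
  if h : (p.1 : Ordinal) = o then
    ⟨((2 * p.2 : ℕ) : Ordinal), (natCast_lt_of_isSuccLimit ho _).le⟩
  else ⟨blockShift p.1 p.2, (blockShift_lt ho (p.1.2.lt_of_ne h) p.2).le⟩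

theorem coe_rowMap_of_ne {o : Ordinal} (ho : IsSuccLimit o) {x : Iic o} (hx : (x : Ordinal) ≠ o)
    (n : ℕ) : (rowMap ho (x, n) : Ordinal) = blockShift x n := by
  simp only [rowMap, dif_neg hx]

theorem rowMap_injective {o : Ordinal} (ho : IsSuccLimit o) : Function.Injective (rowMap ho) := by
  rintro ⟨x, m⟩ ⟨y, n⟩ h
  simp only [rowMap] at h
  split_ifs at h with hx hy hy
  · have : ((2 * m : ℕ) : Ordinal) = ((2 * n : ℕ) : Ordinal) := congrArg Subtype.val h
    rw [Nat.cast_inj] at this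
    exact Prod.ext (Subtype.ext (hx.trans hy.symm)) (by omega)
  · exact absurd (congrArg Subtype.val h).symm (blockShift_ne_natCast_two_mul _ _ _)
  · exact absurd (congrArg Subtype.val h) (blockShift_ne_natCast_two_mul _ _ _)
  · obtain ⟨hxy, hmn⟩ := blockShift_inj.mp (congrArg Subtype.val h)
    exact Prod.ext (Subtype.ext hxy) hmn

theorem derivSet_setOf_rowMap_subset {o : Ordinal} (ho : IsSuccLimit o) (A : Set (Iic o)) :
    derivSet {ξ | ∃ n, rowMap ho (ξ, n) ∈ A} ⊆ derivSet A := by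
  intro ζ hζ
  rw [mem_derivSet_subtype_iff, mem_derivSet_iff_accPt] at hζ ⊢
  have hlim := hζ.isSuccLimit
  refine hζ.of_forall_lt_exists_mem_Ico ?_
  rintro _ ⟨ξ, ⟨n, hn⟩, rfl⟩ hξζ
  refine ⟨_, ⟨_, hn, rfl⟩, ?_⟩
  rw [coe_rowMap_of_ne ho (hξζ.trans_le ζ.2).ne]
  exact ⟨le_blockShift _ _, blockShift_lt hlim hξζ _⟩

end Ordinal

theorem stmt16_general (a : Ordinal) (ha : 2 ≤ a) :
    ∃ f : (OrdSpace a × ℕ) → OrdSpace a, Function.Injective f ∧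
      ∀ A ∈ convIdeal a,
        {ξ : OrdSpace a | {n : ℕ | (ξ, n) ∈ f ⁻¹' A}.Nonempty} ∈ convIdeal a := by
  have ha0 : a ≠ 0 := by
    rintro rfl
    simp at ha
  have ho : IsSuccLimit (ω ^ a) := isSuccLimit_opow_left isSuccLimit_omega0 ha0
  exact ⟨rowMap ho, rowMap_injective ho,
    fun A hA => hA.subset (derivSet_setOf_rowMap_subset ho A)⟩

/-- `conv_α ⊑ conv_α ⊗ {∅}`: there is a one-to-one map `f : (ω^α+1) × ω → ω^α+1` with
`f⁻¹[A] ∈ conv_α ⊗ {∅}` for every `A ∈ conv_α`. -/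
theorem stmt16 (a : Ordinal) (ha : 2 ≤ a) (hac : a.card ≤ Cardinal.aleph0) :
    ∃ f : (OrdSpace a × ℕ) → OrdSpace a, Function.Injective f ∧
      ∀ A ∈ convIdeal a,
        {ξ : OrdSpace a | {n : ℕ | (ξ, n) ∈ f ⁻¹' A}.Nonempty} ∈ convIdeal a :=
  stmt16_general a ha
end
end
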